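/- arXiv:math/9904179 — 10 statements merged into one kernel-verified Lean document; each statement's English description precedes it below -/
import Mathlib

section
/- Let Δ be a countable group acting by homeomorphisms on a nonempty connected topological manifold Ṽ such that the set Ṽ₀ of points of Ṽ with trivial stabilizer is open, connected and dense in Ṽ. Let Ũ be a topological space, let f̃ : Ũ → Ṽ be a homeomorphism, and let f̄ : Ũ → Ṽ be a continuous map such that for every u ∈ Ũ there exists δ ∈ Δ with f̄(u) = δ • f̃(u). Then there exists a unique element δ ∈ Δ such that f̄(u) = δ • f̃(u) for all u ∈ Ũ. (This is the 'orange lemma': any two lifts of a diffeomorphism of models differ by a unique element of the acting group.) -/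
/-!
Put `g := fbar ∘ ftilde⁻¹`, so that `g v ∈ Δ • v` for all `v`, and let `V₀` be the free locus.
A Sierpiński-type argument shows that a map from a connected, locally connected, locally compact
Hausdorff space (here `ℝ`) to a countable set with closed fibres is constant: the set `K` of points
where it is not locally constant is closed, by Baire's theorem in `K` some fibre contains a
nonempty relatively open piece of `K`, and a connected neighbourhood of a point of that piece would
meet `K` in a second fibre. Along a path `γ` in `V₀` the element `δ` with `g (γ t) = δ • γ t` is
well defined by freeness and has closed fibres in `t` because `V` is Hausdorff, so it is constant.
As `V₀` is path-connected, `g = δ • ·` on `V₀`, hence everywhere by density; uniqueness is freeness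
at one point of `V₀`.
-/

open Set Filter Topology

section ClosedFibers

variable {X ι : Type*} [TopologicalSpace X] {f : X → ι}

theorem isOpen_setOf_eventually_eq_self : IsOpen {x | ∀ᶠ y in 𝓝 x, f y = f x} :=
  isOpen_iff_mem_nhds.mpr fun _ hx => by
    filter_upwards [hx, hx.eventually_nhds] with y hy hy'
    filter_upwards [hy'] with z hz using hz.trans hy.symm

theorem IsPreconnected.exists_not_eventually_eq {s : Set X} (hs : IsPreconnected s) {a b : X}
    (hfib : IsClosed (f ⁻¹' {f a})) (ha : a ∈ s) (hb : b ∈ s) (hab : f a ≠ f b) :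
    ∃ m ∈ s, f m = f a ∧ ¬∀ᶠ y in 𝓝 m, f y = f m := by
  by_contra! h
  have hinterior : ∀ m ∈ s, f m = f a → m ∈ interior (f ⁻¹' {f a}) := fun m hm hma => by
    rw [mem_interior_iff_mem_nhds, ← hma]; exact h m hm hma
  have hsub : s ⊆ interior (f ⁻¹' {f a}) :=
    hs.subset_of_closure_inter_subset isOpen_interior ⟨a, ha, hinterior a ha rfl⟩
      fun m ⟨hcl, hm⟩ => hinterior m hm (closure_minimal interior_subset hfib hcl)
  exact hab (interior_subset (hsub hb)).symm

theorem IsLocallyConstant.of_countable_of_isClosed_fiber [T2Space X] [LocallyCompactSpace X]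
    [LocallyConnectedSpace X] [Countable ι] (hf : ∀ i, IsClosed (f ⁻¹' {i})) :
    IsLocallyConstant f := by
  set K := {x | ∀ᶠ y in 𝓝 x, f y = f x}ᶜ
  rw [IsLocallyConstant.iff_eventually_eq]
  suffices K = ∅ from fun x => by_contra fun hx => this.subset hx
  by_contra hne
  have := (nonempty_iff_ne_empty.mpr hne).to_subtype
  have : LocallyCompactSpace K :=
    isOpen_setOf_eventually_eq_self.isClosed_compl.locallyCompactSpace
  obtain ⟨i, t, ht⟩ := nonempty_interior_of_iUnion_of_closed
    (fun i => (hf i).preimage continuous_subtype_val)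
    (iUnion_eq_univ_iff.mpr fun x : K => ⟨f x, rfl⟩)
  obtain ⟨W, hW, hWK⟩ := (mem_nhds_subtype _ _ _).mp (mem_interior_iff_mem_nhds.mp ht)
  set C := connectedComponentIn W t
  obtain ⟨s, hsC, hst⟩ : ∃ s ∈ C, f s ≠ f t := by
    by_contra! h
    exact t.2 (Filter.mem_of_superset (connectedComponentIn_mem_nhds hW) h)
  obtain ⟨m, hmC, hms, hmK⟩ := isPreconnected_connectedComponentIn.exists_not_eventually_eq
    (hf _) hsC (mem_connectedComponentIn (mem_of_mem_nhds hW)) hst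
  have hfm : f m = i :=
    hWK (show ((⟨m, hmK⟩ : K) : X) ∈ W from connectedComponentIn_subset _ _ hmC)
  have hft : f t = i := hWK (show (t : X) ∈ W from mem_of_mem_nhds hW)
  exact hst (hms.symm.trans (hfm.trans hft.symm))

end ClosedFibers

namespace MulAction

variable {G X : Type*} [Group G] [MulAction G X]

theorem smul_left_injective_of_stabilizer_eq_bot {x : X} (h : stabilizer G x = ⊥) :
    Function.Injective (· • x : G → X) := fun a b hab => by
  have hmem : b⁻¹ * a ∈ stabilizer G x := by
    rw [mem_stabilizer_iff, mul_smul]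
    exact inv_smul_eq_iff.mpr hab
  rw [h, Subgroup.mem_bot, inv_mul_eq_one] at hmem
  exact hmem.symm

variable [TopologicalSpace X] [T2Space X] [ContinuousConstSMul G X] [Countable G] {g : X → X}

theorem exists_smul_eq_on_of_isPathConnected (hg : Continuous g)
    (horbit : ∀ x, ∃ δ : G, g x = δ • x) {S : Set X} (hS : IsPathConnected S)
    (hfree : ∀ x ∈ S, stabilizer G x = ⊥) : ∃ δ : G, ∀ x ∈ S, g x = δ • x := by
  choose σ hσ using horbit
  obtain ⟨x₀, -, hjoin⟩ := hS
  refine ⟨σ x₀, fun x hx => ?_⟩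
  obtain ⟨γ, hγS⟩ := hjoin hx
  have hγS' : ∀ t, γ.extend t ∈ S := fun t => hγS _
  have hfiber : ∀ δ, σ ∘ γ.extend ⁻¹' {δ} = {t | g (γ.extend t) = δ • γ.extend t} := by
    refine fun δ => Set.ext fun t => ?_
    change σ (γ.extend t) = δ ↔ g (γ.extend t) = δ • γ.extend t
    rw [hσ, (smul_left_injective_of_stabilizer_eq_bot (hfree _ (hγS' t))).eq_iff]
  have hconst : IsLocallyConstant (σ ∘ γ.extend) := .of_countable_of_isClosed_fiber fun δ => by
    rw [hfiber]
    exact isClosed_eq (hg.comp γ.continuous_extend) (γ.continuous_extend.const_smul δ)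
  have h01 := hconst.apply_eq_of_preconnectedSpace 0 1
  simp only [Function.comp_apply, γ.extend_zero, γ.extend_one] at h01
  rw [hσ, h01]

theorem existsUnique_smul_eq_of_dense [LocallyPathConnectedSpace X] (hg : Continuous g)
    (horbit : ∀ x, ∃ δ : G, g x = δ • x) (hopen : IsOpen {x : X | stabilizer G x = ⊥})
    (hconn : IsConnected {x : X | stabilizer G x = ⊥})
    (hdense : Dense {x : X | stabilizer G x = ⊥}) : ∃! δ : G, ∀ x, g x = δ • x := by
  obtain ⟨δ, hδ⟩ := exists_smul_eq_on_of_isPathConnected hg horbit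
    (hopen.isConnected_iff_isPathConnected.mp hconn) fun _ => id
  obtain ⟨x₀, hx₀⟩ := hconn.nonempty
  refine ⟨δ, fun x => ?_, fun δ' hδ' => ?_⟩
  · exact closure_minimal hδ (isClosed_eq hg (continuous_const_smul δ)) (hdense x)
  · exact smul_left_injective_of_stabilizer_eq_bot hx₀ ((hδ' x₀).symm.trans (hδ x₀ hx₀))

end MulAction

theorem orange_lemma_general {n : ℕ} {Δ : Type*} [Group Δ] [Countable Δ]
    {V : Type*} [TopologicalSpace V] [T2Space V]
    [ChartedSpace (EuclideanSpace ℝ (Fin n)) V]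
    [MulAction Δ V] [ContinuousConstSMul Δ V]
    (hV₀open : IsOpen {v : V | MulAction.stabilizer Δ v = ⊥})
    (hV₀conn : IsConnected {v : V | MulAction.stabilizer Δ v = ⊥})
    (hV₀dense : Dense {v : V | MulAction.stabilizer Δ v = ⊥})
    {U : Type*} [TopologicalSpace U]
    (ftilde : U ≃ₜ V) (fbar : U → V) (hfbar : Continuous fbar)
    (hlift : ∀ u : U, ∃ δ : Δ, fbar u = δ • ftilde u) :
    ∃! δ : Δ, ∀ u : U, fbar u = δ • ftilde u := by
  have := ChartedSpace.locallyPathConnectedSpace (EuclideanSpace ℝ (Fin n)) V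
  have key := MulAction.existsUnique_smul_eq_of_dense (hfbar.comp ftilde.symm.continuous)
    (fun v => by simpa using hlift (ftilde.symm v)) hV₀open hV₀conn hV₀dense
  simpa only [ftilde.surjective.forall, Function.comp_apply, ftilde.symm_apply_apply] using key

/-- The "orange lemma": two lifts of a diffeomorphism of models differ by a
unique element of the acting discrete (countable) group. -/
theorem orange_lemma {n : ℕ} {Δ : Type*} [Group Δ] [Countable Δ]
    {V : Type*} [TopologicalSpace V] [T2Space V]
    [ChartedSpace (EuclideanSpace ℝ (Fin n)) V]
    [Nonempty V] [ConnectedSpace V]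
    [MulAction Δ V] [ContinuousConstSMul Δ V]
    (hV₀open : IsOpen {v : V | MulAction.stabilizer Δ v = ⊥})
    (hV₀conn : IsConnected {v : V | MulAction.stabilizer Δ v = ⊥})
    (hV₀dense : Dense {v : V | MulAction.stabilizer Δ v = ⊥})
    {U : Type*} [TopologicalSpace U]
    (ftilde : U ≃ₜ V) (fbar : U → V) (hfbar : Continuous fbar)
    (hlift : ∀ u : U, ∃ δ : Δ, fbar u = δ • ftilde u) :
    ∃! δ : Δ, ∀ u : U, fbar u = δ • ftilde u :=
  orange_lemma_general (n := n) hV₀open hV₀conn hV₀dense ftilde fbar hfbar hlift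
end

section
/- Let Γ be a countable group acting by homeomorphisms on a nonempty connected topological manifold Ũ whose set Ũ₀ of points with trivial stabilizer is open, connected and dense, and let Δ be a countable group acting by homeomorphisms on a nonempty connected topological manifold Ṽ whose set Ṽ₀ of points with trivial stabilizer is open, connected and dense. Let f̃ : Ũ → Ṽ be a homeomorphism that descends to a bijection of orbit spaces, i.e. for all u, u' ∈ Ũ the points f̃(u) and f̃(u') lie in the same Δ-orbit if and only if u and u' lie in the same Γ-orbit. Then there exists a group isomorphism F : Γ → Δ such that f̃(γ • u) = F(γ) • f̃(u) for all γ ∈ Γ and all u ∈ Ũ. (This is the 'green lemma'.) -/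
/-!
Compose `f` with the action of `γ ∈ Γ`: the map `f ∘ (γ • ·) ∘ f⁻¹` of `V` sends every point into
its own `Δ`-orbit, so on the free part `V₀` it agrees with `δ • ·` on one of the countably many
disjoint closed sets `{v ∈ V₀ | f (γ • f⁻¹ v) = δ • v}`, `δ ∈ Δ`, which cover `V₀`. A connected,
locally connected, locally compact Hausdorff space admits no nontrivial countable partition into
closed sets (a Sierpiński-type argument using the Baire property of the set of points lying in no
interior), so a single `δ =: F γ` works on `V₀`, hence on `V` by density. Freeness at one point
makes `F` multiplicative, and the same construction for `f⁻¹` gives its inverse.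
-/

open Set Function

section CountableClosedPartition

variable {X ι : Type*} [TopologicalSpace X] {C : ι → Set X}

lemma mem_interior_of_mem_iUnion_interior (hdisj : Pairwise (Disjoint on C)) {x : X} {i : ι}
    (hx : x ∈ C i) (hint : x ∈ ⋃ j, interior (C j)) : x ∈ interior (C i) := by
  obtain ⟨j, hj⟩ := mem_iUnion.mp hint
  obtain rfl : j = i := by
    by_contra hne
    exact (hdisj hne).le_bot ⟨interior_subset hj, hx⟩
  exact hj

lemma IsPreconnected.subset_of_inter_compl_iUnion_interior_subset
    (hclosed : ∀ i, IsClosed (C i)) (hdisj : Pairwise (Disjoint on C))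
    (hcover : ⋃ i, C i = univ) {O : Set X} (hO : IsPreconnected O) {i : ι} {x : X}
    (hxO : x ∈ O) (hxi : x ∈ C i) (hOB : O ∩ (⋃ j, interior (C j))ᶜ ⊆ C i) : O ⊆ C i := by
  -- each other piece meets `O` only inside its interior, so it is relatively clopen in `O`
  have hO_disj : ∀ j, j ≠ i → O ⊆ (C j)ᶜ := by
    intro j hji
    have hOj : O ∩ C j ⊆ interior (C j) := fun z ⟨hzO, hzj⟩ => by
      by_contra hz
      have hzi : z ∈ C i :=
        hOB ⟨hzO, fun hint => hz (mem_interior_of_mem_iUnion_interior hdisj hzj hint)⟩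
      exact (hdisj hji).le_bot ⟨hzj, hzi⟩
    refine hO.subset_right_of_subset_union isOpen_interior (hclosed j).isOpen_compl
      (disjoint_compl_right.mono_left interior_subset)
      (fun z hz => (em (z ∈ C j)).imp (fun hzj => hOj ⟨hz, hzj⟩) id) ⟨x, hxO, ?_⟩
    exact fun hxj => (hdisj hji).le_bot ⟨hxj, hxi⟩
  intro z hz
  obtain ⟨j, hzj⟩ := iUnion_eq_univ_iff.mp hcover z
  obtain rfl | hji := eq_or_ne j i
  · exact hzj
  · exact absurd hzj (hO_disj j hji hz)

variable [T2Space X] [LocallyCompactSpace X] [LocallyConnectedSpace X] [Countable ι]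

/-- The closed set `B` of points lying in no interior is Baire, so if nonempty it has a relatively
open part inside one piece `C i`; a connected open set around a point of it then lies in `C i`. -/
lemma iUnion_interior_eq_univ_of_pairwise_disjoint_closed (hclosed : ∀ i, IsClosed (C i))
    (hdisj : Pairwise (Disjoint on C)) (hcover : ⋃ i, C i = univ) :
    ⋃ i, interior (C i) = univ := by
  set B : Set X := (⋃ i, interior (C i))ᶜ
  suffices B = ∅ from compl_empty_iff.mp this
  by_contra hB
  have hBclosed : IsClosed B := (isOpen_iUnion fun i => isOpen_interior).isClosed_compl
  have : Nonempty B := (nonempty_iff_ne_empty.mpr hB).to_subtype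
  have : LocallyCompactSpace B := hBclosed.locallyCompactSpace
  have hcoverB : ⋃ i, ((↑) ⁻¹' C i : Set B) = univ := by
    simp only [← preimage_iUnion, hcover, preimage_univ]
  obtain ⟨i, ⟨x, hx⟩⟩ := nonempty_interior_of_iUnion_of_closed
    (fun i => (hclosed i).preimage continuous_subtype_val) hcoverB
  obtain ⟨W, hWopen, hW⟩ := isOpen_induced_iff.mp (isOpen_interior (s := ((↑) ⁻¹' C i : Set B)))
  have hxW : (x : X) ∈ W := by rw [← mem_preimage, hW]; exact hx
  obtain ⟨O, ⟨hOopen, hxO, hOconn⟩, hOW⟩ :=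
    (LocallyConnectedSpace.open_connected_basis (x : X)).mem_iff.mp (hWopen.mem_nhds hxW)
  have hOB : O ∩ B ⊆ C i := fun y ⟨hyO, hyB⟩ => by
    have hy : (⟨y, hyB⟩ : B) ∈ interior ((↑) ⁻¹' C i : Set B) := hW ▸ hOW hyO
    exact mem_preimage.mp (interior_subset hy)
  have hxi : (x : X) ∈ C i := hOB ⟨hxO, x.2⟩
  have hOi : O ⊆ C i := hOconn.isPreconnected.subset_of_inter_compl_iUnion_interior_subset
    hclosed hdisj hcover hxO hxi hOB
  exact x.2 (mem_iUnion.mpr ⟨i, mem_interior.mpr ⟨O, hOi, hOopen, hxO⟩⟩)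

lemma exists_eq_univ_of_pairwise_disjoint_closed [ConnectedSpace X]
    (hclosed : ∀ i, IsClosed (C i)) (hdisj : Pairwise (Disjoint on C))
    (hcover : ⋃ i, C i = univ) : ∃ i, C i = univ := by
  have hint := iUnion_interior_eq_univ_of_pairwise_disjoint_closed hclosed hdisj hcover
  have hopen : ∀ i, IsOpen (C i) := fun i => isOpen_iff_forall_mem_open.mpr fun x hx =>
    ⟨_, interior_subset, isOpen_interior,
      mem_interior_of_mem_iUnion_interior hdisj hx (eq_univ_iff_forall.mp hint x)⟩
  obtain ⟨x⟩ := (inferInstance : Nonempty X)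
  obtain ⟨i, hi⟩ := iUnion_eq_univ_iff.mp hcover x
  exact ⟨i, IsClopen.eq_univ ⟨hclosed i, hopen i⟩ ⟨x, hi⟩⟩

end CountableClosedPartition

lemma smul_left_injective_of_stabilizer_eq_bot {G α : Type*} [Group G] [MulAction G α] {x : α}
    (hx : MulAction.stabilizer G x = ⊥) : Injective fun g : G => g • x := by
  intro g g' h
  have : g'⁻¹ * g ∈ MulAction.stabilizer G x := by
    rw [MulAction.mem_stabilizer_iff, mul_smul, show g • x = g' • x from h, inv_smul_smul]
  rw [hx, Subgroup.mem_bot, inv_mul_eq_one] at this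
  exact this.symm

section Rigidity

variable {Γ U : Type*} [Group Γ] [Countable Γ] [TopologicalSpace U] [T2Space U]
  [LocallyCompactSpace U] [LocallyConnectedSpace U] [MulAction Γ U] [ContinuousConstSMul Γ U]

theorem exists_eq_smul_of_forall_mem_orbit
    (hopen : IsOpen {u : U | MulAction.stabilizer Γ u = ⊥})
    (hconn : IsConnected {u : U | MulAction.stabilizer Γ u = ⊥})
    (hdense : Dense {u : U | MulAction.stabilizer Γ u = ⊥})
    {h : U → U} (hcont : Continuous h) (horb : ∀ u, ∃ γ : Γ, h u = γ • u) :
    ∃ γ : Γ, ∀ u, h u = γ • u := by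
  set U₀ := {u : U | MulAction.stabilizer Γ u = ⊥}
  have : ConnectedSpace U₀ := Subtype.connectedSpace hconn
  have : LocallyCompactSpace U₀ := hopen.locallyCompactSpace
  have : LocallyConnectedSpace U₀ := hopen.locallyConnectedSpace
  let C : Γ → Set U₀ := fun γ => {x | h x = γ • (x : U)}
  have hclosed : ∀ γ, IsClosed (C γ) := fun γ =>
    isClosed_eq (hcont.comp continuous_subtype_val)
      ((continuous_const_smul γ).comp continuous_subtype_val)
  have hdisj : Pairwise (Disjoint on C) := fun γ γ' hne =>
    disjoint_left.mpr fun x hx hx' =>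
      hne (smul_left_injective_of_stabilizer_eq_bot x.2 (hx.symm.trans hx'))
  have hcover : ⋃ γ, C γ = univ := iUnion_eq_univ_iff.mpr fun x => horb x
  obtain ⟨γ, hγ⟩ := exists_eq_univ_of_pairwise_disjoint_closed hclosed hdisj hcover
  refine ⟨γ, congrFun (hcont.ext_on hdense (continuous_const_smul γ) fun u hu => ?_)⟩
  exact eq_univ_iff_forall.mp hγ ⟨u, hu⟩

end Rigidity

section Intertwining

variable {Γ Δ U V : Type*} [Group Γ] [Group Δ] [MulAction Γ U] [MulAction Δ V]

theorem Homeomorph.exists_smul_intertwining [Countable Δ] [TopologicalSpace U]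
    [TopologicalSpace V] [T2Space V] [LocallyCompactSpace V] [LocallyConnectedSpace V]
    [ContinuousConstSMul Γ U] [ContinuousConstSMul Δ V]
    (hopen : IsOpen {v : V | MulAction.stabilizer Δ v = ⊥})
    (hconn : IsConnected {v : V | MulAction.stabilizer Δ v = ⊥})
    (hdense : Dense {v : V | MulAction.stabilizer Δ v = ⊥})
    (f : U ≃ₜ V) (hf : ∀ (γ : Γ) (u : U), ∃ δ : Δ, f (γ • u) = δ • f u) :
    ∃ F : Γ → Δ, ∀ γ u, f (γ • u) = F γ • f u := by
  have hconj : ∀ γ : Γ, ∃ δ : Δ, ∀ u, f (γ • u) = δ • f u := fun γ => by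
    obtain ⟨δ, hδ⟩ := exists_eq_smul_of_forall_mem_orbit hopen hconn hdense
      (f.continuous.comp ((continuous_const_smul γ).comp f.symm.continuous))
      fun v => by simpa using hf γ (f.symm v)
    exact ⟨δ, fun u => by simpa using hδ (f u)⟩
  choose F hF using hconj
  exact ⟨F, hF⟩

lemma map_mul_of_smul_intertwining {f : U → V} {F : Γ → Δ}
    (hF : ∀ γ u, f (γ • u) = F γ • f u) {u₀ : U} (hu₀ : MulAction.stabilizer Δ (f u₀) = ⊥)
    (a b : Γ) : F (a * b) = F a * F b :=
  smul_left_injective_of_stabilizer_eq_bot hu₀ <| by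
    simp only [← hF, mul_smul]

lemma leftInverse_of_smul_intertwining (f : U ≃ V) {F : Γ → Δ} {G : Δ → Γ}
    (hF : ∀ γ u, f (γ • u) = F γ • f u) (hG : ∀ δ v, f.symm (δ • v) = G δ • f.symm v)
    {u₀ : U} (hu₀ : MulAction.stabilizer Γ u₀ = ⊥) : LeftInverse G F := fun γ =>
  smul_left_injective_of_stabilizer_eq_bot hu₀ <| by
    simpa [← hF] using (hG (F γ) (f u₀)).symm

end Intertwining

theorem green_lemma_general {n m : ℕ} {Γ Δ : Type*} [Group Γ] [Countable Γ]
    [Group Δ] [Countable Δ]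
    {U : Type*} [TopologicalSpace U] [T2Space U]
    [ChartedSpace (EuclideanSpace ℝ (Fin n)) U]
    [MulAction Γ U] [ContinuousConstSMul Γ U]
    {V : Type*} [TopologicalSpace V] [T2Space V]
    [ChartedSpace (EuclideanSpace ℝ (Fin m)) V]
    [MulAction Δ V] [ContinuousConstSMul Δ V]
    (hU₀open : IsOpen {u : U | MulAction.stabilizer Γ u = ⊥})
    (hU₀conn : IsConnected {u : U | MulAction.stabilizer Γ u = ⊥})
    (hU₀dense : Dense {u : U | MulAction.stabilizer Γ u = ⊥})
    (hV₀open : IsOpen {v : V | MulAction.stabilizer Δ v = ⊥})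
    (hV₀conn : IsConnected {v : V | MulAction.stabilizer Δ v = ⊥})
    (hV₀dense : Dense {v : V | MulAction.stabilizer Δ v = ⊥})
    (f : U ≃ₜ V)
    (hdesc : ∀ u u' : U, (∃ δ : Δ, f u' = δ • f u) ↔ (∃ γ : Γ, u' = γ • u)) :
    ∃ F : Γ ≃* Δ, ∀ (γ : Γ) (u : U), f (γ • u) = F γ • f u := by
  have := ChartedSpace.locallyCompactSpace (EuclideanSpace ℝ (Fin n)) U
  have := ChartedSpace.locallyConnectedSpace (EuclideanSpace ℝ (Fin n)) U
  have := ChartedSpace.locallyCompactSpace (EuclideanSpace ℝ (Fin m)) V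
  have := ChartedSpace.locallyConnectedSpace (EuclideanSpace ℝ (Fin m)) V
  obtain ⟨F, hF⟩ := f.exists_smul_intertwining hV₀open hV₀conn hV₀dense fun γ u =>
    (hdesc u (γ • u)).mpr ⟨γ, rfl⟩
  obtain ⟨G, hG⟩ := f.symm.exists_smul_intertwining hU₀open hU₀conn hU₀dense fun δ v =>
    (hdesc (f.symm v) (f.symm (δ • v))).mp ⟨δ, by simp⟩
  obtain ⟨u₀, hu₀⟩ := hU₀conn.nonempty
  obtain ⟨v₀, hv₀⟩ := hV₀conn.nonempty
  have hGF : LeftInverse G F := leftInverse_of_smul_intertwining f.toEquiv hF hG hu₀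
  have hFG : LeftInverse F G := leftInverse_of_smul_intertwining f.toEquiv.symm hG hF hv₀
  have hmul := map_mul_of_smul_intertwining hF (u₀ := f.symm v₀) (by rwa [f.apply_symm_apply])
  exact ⟨MulEquiv.mk' ⟨F, G, hGF, hFG⟩ hmul, hF⟩

/-- The "green lemma": a homeomorphism between two models which descends to a
bijection of the orbit spaces intertwines the two group actions via a group
isomorphism `F : Γ ≃* Δ`. -/
theorem green_lemma {n m : ℕ} {Γ Δ : Type*} [Group Γ] [Countable Γ]
    [Group Δ] [Countable Δ]
    {U : Type*} [TopologicalSpace U] [T2Space U]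
    [ChartedSpace (EuclideanSpace ℝ (Fin n)) U]
    [Nonempty U] [ConnectedSpace U]
    [MulAction Γ U] [ContinuousConstSMul Γ U]
    {V : Type*} [TopologicalSpace V] [T2Space V]
    [ChartedSpace (EuclideanSpace ℝ (Fin m)) V]
    [Nonempty V] [ConnectedSpace V]
    [MulAction Δ V] [ContinuousConstSMul Δ V]
    (hU₀open : IsOpen {u : U | MulAction.stabilizer Γ u = ⊥})
    (hU₀conn : IsConnected {u : U | MulAction.stabilizer Γ u = ⊥})
    (hU₀dense : Dense {u : U | MulAction.stabilizer Γ u = ⊥})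
    (hV₀open : IsOpen {v : V | MulAction.stabilizer Δ v = ⊥})
    (hV₀conn : IsConnected {v : V | MulAction.stabilizer Δ v = ⊥})
    (hV₀dense : Dense {v : V | MulAction.stabilizer Δ v = ⊥})
    (f : U ≃ₜ V)
    (hdesc : ∀ u u' : U, (∃ δ : Δ, f u' = δ • f u) ↔ (∃ γ : Γ, u' = γ • u)) :
    ∃ F : Γ ≃* Δ, ∀ (γ : Γ) (u : U), f (γ • u) = F γ • f u :=
  green_lemma_general (n := n) (m := m) hU₀open hU₀conn hU₀dense hV₀open hV₀conn hV₀dense f hdesc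
end

section
/- Let Q₁ ⊆ ℝⁿ and Q₂ ⊆ ℝᵐ be countable additive subgroups, and let f : ℝⁿ/Q₁ → ℝᵐ/Q₂ be a homomorphism of the quotient additive groups. Suppose f admits at least one continuous lift, i.e. a continuous map g : ℝⁿ → ℝᵐ with π₂ ∘ g = f ∘ π₁, where π₁, π₂ are the canonical projections. Then f has a unique continuous lift f̃ with f̃(0) = 0; moreover this lift f̃ is ℝ-linear and satisfies f̃(Q₁) ⊆ Q₂. In addition, f̃ is surjective whenever f is surjective, and f̃ is a linear isomorphism whenever f is bijective. (This is the paper's assertion that the base-point-preserving lift of a quasitorus homomorphism is the associated quasi-Lie algebra homomorphism, and is an epimorphism, respectively isomorphism, whenever the quasitorus homomorphism is.) -/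
open Set Cardinal

/-- A continuous map into a countable set of `ℝᵐ` is constant. -/
lemma continuous_into_countable_const {n m : ℕ} {S : Set (Fin m → ℝ)}
    (hS : S.Countable) {h : (Fin n → ℝ) → (Fin m → ℝ)}
    (hc : Continuous h) (hQ : ∀ x, h x ∈ S) (x : Fin n → ℝ) : h x = h 0 := by
  by_contra hne
  obtain ⟨i, hi⟩ := Function.ne_iff.mp hne
  set u : ℝ → ℝ := fun t => h (t • x) i with hu
  have hcu : Continuous u :=
    (continuous_apply i).comp (hc.comp (continuous_id.smul continuous_const))
  have h0 : u 0 = h 0 i := by simp [hu]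
  have h1 : u 1 = h x i := by simp [hu]
  have hsub : Set.uIcc (u 0) (u 1) ⊆ (fun v : Fin m → ℝ => v i) '' S := by
    intro y hy
    obtain ⟨t, _, ht⟩ := intermediate_value_uIcc hcu.continuousOn hy
    exact ⟨h (t • x), hQ _, ht⟩
  have hcount : (Set.uIcc (u 0) (u 1)).Countable :=
    (hS.image _).mono hsub
  have hne' : u 0 ≠ u 1 := by rw [h0, h1]; exact fun hh => hi hh.symm
  have hlt : min (u 0) (u 1) < max (u 0) (u 1) := min_lt_max.mpr hne'
  have : (#(Set.uIcc (u 0) (u 1))) = Cardinal.continuum := by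
    rw [Set.uIcc]; exact Cardinal.mk_Icc_real hlt
  have hle : (#(Set.uIcc (u 0) (u 1))) ≤ Cardinal.aleph0 := by
    haveI := hcount.to_subtype
    exact Cardinal.mk_le_aleph0
  rw [this] at hle
  exact absurd hle (not_le.mpr Cardinal.aleph0_lt_continuum)

/-- A homomorphism of quasitori `ℝⁿ/Q₁ → ℝᵐ/Q₂` admitting a continuous lift has a
unique continuous lift sending `0` to `0`; this lift is `ℝ`-linear, maps `Q₁` into
`Q₂`, is surjective whenever the homomorphism is, and bijective (hence a linear
isomorphism) whenever the homomorphism is bijective. -/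
theorem quasitorus_hom_lift {n m : ℕ}
    (Q₁ : AddSubgroup (Fin n → ℝ)) (Q₂ : AddSubgroup (Fin m → ℝ))
    [Countable Q₁] [Countable Q₂]
    (f : (Fin n → ℝ) ⧸ Q₁ →+ (Fin m → ℝ) ⧸ Q₂)
    (hlift : ∃ g : (Fin n → ℝ) → (Fin m → ℝ), Continuous g ∧
      ∀ x, (QuotientAddGroup.mk (g x) : (Fin m → ℝ) ⧸ Q₂) = f (QuotientAddGroup.mk x)) :
    ∃ ft : (Fin n → ℝ) → (Fin m → ℝ),
      (Continuous ft ∧ ft 0 = 0 ∧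
        ∀ x, (QuotientAddGroup.mk (ft x) : (Fin m → ℝ) ⧸ Q₂) = f (QuotientAddGroup.mk x)) ∧
      (∀ g : (Fin n → ℝ) → (Fin m → ℝ), Continuous g → g 0 = 0 →
        (∀ x, (QuotientAddGroup.mk (g x) : (Fin m → ℝ) ⧸ Q₂) = f (QuotientAddGroup.mk x)) →
        g = ft) ∧
      IsLinearMap ℝ ft ∧
      (∀ q ∈ Q₁, ft q ∈ Q₂) ∧
      (Function.Surjective f → Function.Surjective ft) ∧
      (Function.Bijective f → Function.Bijective ft) := by
  obtain ⟨g, hg, hgf⟩ := hlift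
  have hQ2count : (Q₂ : Set (Fin m → ℝ)).Countable := Set.countable_coe_iff.mp ‹_›
  have hQ1count : (Q₁ : Set (Fin n → ℝ)).Countable := Set.countable_coe_iff.mp ‹_›
  have hg0 : g 0 ∈ Q₂ := by
    have := hgf 0
    rw [show (QuotientAddGroup.mk (0 : Fin n → ℝ) : (Fin n → ℝ) ⧸ Q₁) = 0 from rfl,
      map_zero] at this
    exact (QuotientAddGroup.eq_zero_iff _).mp this
  set ft : (Fin n → ℝ) → (Fin m → ℝ) := fun x => g x - g 0 with hft
  have hftc : Continuous ft := hg.sub continuous_const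
  have hft0 : ft 0 = 0 := by simp [hft]
  have hftlift : ∀ x, (QuotientAddGroup.mk (ft x) : (Fin m → ℝ) ⧸ Q₂)
      = f (QuotientAddGroup.mk x) := by
    intro x
    have : (QuotientAddGroup.mk (ft x) : (Fin m → ℝ) ⧸ Q₂) = QuotientAddGroup.mk (g x) := by
      rw [QuotientAddGroup.eq]
      simpa [hft] using Q₂.neg_mem hg0
    rw [this, hgf]
  -- additivity
  have hadd : ∀ a b, ft (a + b) = ft a + ft b := by
    intro a b
    set h : (Fin n → ℝ) → (Fin m → ℝ) := fun x => ft (x + b) - ft x - ft b with hh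
    have hhc : Continuous h :=
      ((hftc.comp (continuous_id.add continuous_const)).sub hftc).sub continuous_const
    have hmem : ∀ x, h x ∈ (Q₂ : Set (Fin m → ℝ)) := by
      intro x
      have : (QuotientAddGroup.mk (h x) : (Fin m → ℝ) ⧸ Q₂) = 0 := by
        have e1 := hftlift (x + b)
        have e2 := hftlift x
        have e3 := hftlift b
        have : (QuotientAddGroup.mk (h x) : (Fin m → ℝ) ⧸ Q₂)
            = QuotientAddGroup.mk (ft (x + b)) - QuotientAddGroup.mk (ft x)
              - QuotientAddGroup.mk (ft b) := by
          simp [hh, QuotientAddGroup.mk_sub]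
        rw [this, e1, e2, e3, show (QuotientAddGroup.mk (x + b) : (Fin n → ℝ) ⧸ Q₁)
          = QuotientAddGroup.mk x + QuotientAddGroup.mk b from rfl, map_add]
        abel
      exact (QuotientAddGroup.eq_zero_iff _).mp this
    have := continuous_into_countable_const hQ2count hhc hmem a
    have h0 : h 0 = 0 := by simp [hh, hft0]
    rw [h0] at this
    have : ft (a + b) - ft a - ft b = 0 := this
    linear_combination (norm := module) this
  have hmonoid : ∀ x, ft x = (AddMonoidHom.mk' ft hadd) x := fun _ => rfl
  have hcontlin : IsLinearMap ℝ ft := by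
    have := (AddMonoidHom.mk' ft hadd).toRealLinearMap hftc
    constructor
    · exact hadd
    · intro c x
      have hsm := ((AddMonoidHom.mk' ft hadd).toRealLinearMap hftc).map_smul c x
      exact hsm
  set L : (Fin n → ℝ) →ₗ[ℝ] (Fin m → ℝ) := IsLinearMap.mk' ft hcontlin with hL
  -- uniqueness
  have huniq : ∀ g' : (Fin n → ℝ) → (Fin m → ℝ), Continuous g' → g' 0 = 0 →
      (∀ x, (QuotientAddGroup.mk (g' x) : (Fin m → ℝ) ⧸ Q₂) = f (QuotientAddGroup.mk x)) →
      g' = ft := by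
    intro g' hg'c hg'0 hg'lift
    funext x
    set h : (Fin n → ℝ) → (Fin m → ℝ) := fun y => g' y - ft y with hh
    have hhc : Continuous h := hg'c.sub hftc
    have hmem : ∀ y, h y ∈ (Q₂ : Set (Fin m → ℝ)) := by
      intro y
      have : (QuotientAddGroup.mk (h y) : (Fin m → ℝ) ⧸ Q₂) = 0 := by
        have : (QuotientAddGroup.mk (h y) : (Fin m → ℝ) ⧸ Q₂)
            = QuotientAddGroup.mk (g' y) - QuotientAddGroup.mk (ft y) := by
          simp [hh, QuotientAddGroup.mk_sub]
        rw [this, hg'lift, hftlift, sub_self]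
      exact (QuotientAddGroup.eq_zero_iff _).mp this
    have := continuous_into_countable_const hQ2count hhc hmem x
    have h0 : h 0 = 0 := by simp [hh, hg'0, hft0]
    rw [h0] at this
    exact sub_eq_zero.mp this
  -- maps Q₁ into Q₂
  have hmap : ∀ q ∈ Q₁, ft q ∈ Q₂ := by
    intro q hq
    have : (QuotientAddGroup.mk (ft q) : (Fin m → ℝ) ⧸ Q₂) = 0 := by
      rw [hftlift, (QuotientAddGroup.eq_zero_iff q).mpr hq, map_zero]
    exact (QuotientAddGroup.eq_zero_iff _).mp this
  -- surjectivity
  have hsurj : Function.Surjective f → Function.Surjective ft := by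
    intro hf
    have hcover : (⋃ q : Q₂, ((· + (q : Fin m → ℝ)) '' (LinearMap.range L : Set (Fin m → ℝ))))
        = Set.univ := by
      apply Set.eq_univ_of_forall
      intro y
      obtain ⟨z, hz⟩ := hf (QuotientAddGroup.mk y)
      obtain ⟨x, rfl⟩ := QuotientAddGroup.mk_surjective z
      have : (QuotientAddGroup.mk (ft x) : (Fin m → ℝ) ⧸ Q₂) = QuotientAddGroup.mk y := by
        rw [hftlift, hz]
      have hq : y - ft x ∈ Q₂ := by
        have := (QuotientAddGroup.eq).mp this
        simpa [neg_add_eq_sub] using this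
      refine Set.mem_iUnion.mpr ⟨⟨y - ft x, hq⟩, ⟨ft x, ⟨x, rfl⟩, by simp⟩⟩
    have hclosed : ∀ q : Q₂, IsClosed
        ((· + (q : Fin m → ℝ)) '' (LinearMap.range L : Set (Fin m → ℝ))) := by
      intro q
      exact ((Homeomorph.addRight (q : Fin m → ℝ)).isClosedMap) _
        (LinearMap.range L).closed_of_finiteDimensional
    obtain ⟨q, hq⟩ := nonempty_interior_of_iUnion_of_closed hclosed hcover
    have hint : (interior (LinearMap.range L : Set (Fin m → ℝ))).Nonempty := by
      obtain ⟨y, hy⟩ := hq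
      have heq : (fun x => x + (q : Fin m → ℝ)) = ⇑(Homeomorph.addRight (q : Fin m → ℝ)) := rfl
      rw [heq, ← Homeomorph.image_interior] at hy
      obtain ⟨z, hz, _⟩ := hy
      exact ⟨z, hz⟩
    have htop : LinearMap.range L = ⊤ := Submodule.eq_top_of_nonempty_interior' _ hint
    intro y
    obtain ⟨x, hx⟩ := LinearMap.range_eq_top.mp htop y
    exact ⟨x, hx⟩
  -- bijectivity
  refine ⟨ft, ⟨hftc, hft0, hftlift⟩, huniq, hcontlin, hmap, hsurj, ?_⟩
  intro hf
  refine ⟨?_, hsurj hf.2⟩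
  intro a b hab
  by_contra hne
  set v : Fin n → ℝ := a - b with hv
  have hv0 : v ≠ 0 := sub_ne_zero.mpr hne
  have hftv : ft v = 0 := by
    have := hcontlin.map_smul
    have : ft v = ft a - ft b := by
      have h1 : ft a = ft (v + b) := by rw [hv]; ring_nf
      rw [h1, hadd]; abel
    rw [this, hab, sub_self]
  have hline : ∀ r : ℝ, r • v ∈ Q₁ := by
    intro r
    have h1 : ft (r • v) = 0 := by rw [hcontlin.map_smul, hftv, smul_zero]
    have h2 : f (QuotientAddGroup.mk (r • v)) = 0 := by
      rw [← hftlift, h1]; rfl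
    have h3 : (QuotientAddGroup.mk (r • v) : (Fin n → ℝ) ⧸ Q₁) = 0 := by
      apply hf.1
      rw [h2, map_zero]
    exact (QuotientAddGroup.eq_zero_iff _).mp h3
  have hinj : Function.Injective (fun r : ℝ => (⟨r • v, hline r⟩ : Q₁)) := by
    intro r s hrs
    have : r • v = s • v := congrArg Subtype.val hrs
    exact smul_left_injective ℝ hv0 this
  have : Uncountable Q₁ := hinj.uncountable
  exact not_uncountable this
end

section
/- Let 𝔱 be a finite-dimensional real vector space, let B be a basis of 𝔱, let L be the additive subgroup of 𝔱 generated by B (a lattice), and let T := 𝔱/L be the quotient group (a torus). Let 𝔫 ⊆ 𝔱 be a linear subspace, let N be the image of 𝔫 under the projection 𝔱 → T (a connected Lie subgroup of T), let 𝔡 be a linear complement of 𝔫 in 𝔱 (𝔡 ∩ 𝔫 = {0} and 𝔡 + 𝔫 = 𝔱), and let π_𝔡 : 𝔱 → 𝔡 be the linear projection onto 𝔡 with kernel 𝔫. Then the composite p : 𝔡 ↪ 𝔱 → T → T/N is a surjective group homomorphism whose kernel is Q := π_𝔡(L); consequently p induces a group isomorphism 𝔡/Q ≅ T/N. Moreover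 Q is a quasilattice in 𝔡: it is generated over ℤ by the finitely many vectors π_𝔡(b), b ∈ B, which span 𝔡 over ℝ. (This makes precise the proposition that the quotient of a torus by a Lie subgroup is a quasitorus of dimension dim T − dim N.) -/
/-! Every homomorphism `f : 𝔱 →+ H` that kills `𝔫` factors through the projection `π𝔡`, as
`f ∘ 𝔡.subtype ∘ π𝔡 = f`, since `x - π𝔡 x ∈ 𝔫`. Applied to `f : 𝔱 → T → T/N`, whose kernel is
`L + 𝔫`, this makes `p = f ∘ 𝔡.subtype` surjective with kernel `π𝔡(L + 𝔫) = π𝔡(L)`.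
The generators of `Q` and their real span are the images under `π𝔡` of those of `L` and `𝔱`. -/

open QuotientAddGroup

theorem QuotientAddGroup.ker_mk'_map_comp_mk' {G : Type*} [AddCommGroup G]
    (L K : AddSubgroup G) : ((mk' (K.map (mk' L))).comp (mk' L)).ker = L ⊔ K := by
  rw [← AddMonoidHom.comap_ker, ker_mk', comap_map_mk']

theorem AddMonoidHom.ker_eq_map_ker_comp {G H K : Type*} [AddGroup G] [AddGroup H] [AddGroup K]
    (g : H →+ K) {π : G →+ H} (hπ : Function.Surjective π) :
    g.ker = (g.comp π).ker.map π := by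
  rw [← AddMonoidHom.comap_ker, AddSubgroup.map_comap_eq_self_of_surjective hπ]

theorem Submodule.span_range_comp_eq_top_of_surjective {R M M' ι : Type*} [Semiring R]
    [AddCommMonoid M] [Module R M] [AddCommMonoid M'] [Module R M'] {v : ι → M}
    (hv : span R (Set.range v) = ⊤) {f : M →ₗ[R] M'} (hf : Function.Surjective f) :
    span R (Set.range (f ∘ v)) = ⊤ := by
  rw [Set.range_comp, span_image, hv, map_top, LinearMap.range_eq_top.2 hf]

namespace Submodule

variable {R E H : Type*} [Ring R] [AddCommGroup E] [Module R E] [AddCommGroup H]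
  {p q : Submodule R E} {f : E →+ H}

theorem comp_subtype_comp_projectionOnto (hpq : IsCompl p q) (hf : q.toAddSubgroup ≤ f.ker) :
    (f.comp p.subtype.toAddMonoidHom).comp (p.projectionOnto q hpq).toAddMonoidHom = f := by
  ext x
  have hsub : x - p.projection q hpq x ∈ q := by
    rw [← projection_eq_self_sub_projection hpq]
    exact coe_mem _
  have hx : f (x - p.projection q hpq x) = 0 := hf hsub
  rw [map_sub, sub_eq_zero] at hx
  simpa using hx.symm

theorem surjective_comp_subtype_of_le_ker (hpq : IsCompl p q) (hf : q.toAddSubgroup ≤ f.ker)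
    (hsurj : Function.Surjective f) : Function.Surjective (f.comp p.subtype.toAddMonoidHom) := by
  rw [← comp_subtype_comp_projectionOnto hpq hf, AddMonoidHom.coe_comp] at hsurj
  exact hsurj.of_comp

theorem ker_comp_subtype_eq_map_projectionOnto (hpq : IsCompl p q) {L : AddSubgroup E}
    (hf : f.ker = L ⊔ q.toAddSubgroup) :
    (f.comp p.subtype.toAddMonoidHom).ker = L.map (p.projectionOnto q hpq).toAddMonoidHom := by
  have hq : q.toAddSubgroup.map (p.projectionOnto q hpq).toAddMonoidHom = ⊥ := by
    rw [AddSubgroup.map_eq_bot_iff]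
    intro x hx
    exact projectionOnto_apply_of_mem_right hpq hx
  have hπ : Function.Surjective (p.projectionOnto q hpq).toAddMonoidHom :=
    projectionOnto_surjective hpq
  rw [AddMonoidHom.ker_eq_map_ker_comp _ hπ,
    comp_subtype_comp_projectionOnto hpq (hf ▸ le_sup_right), hf, AddSubgroup.map_sup, hq,
    sup_bot_eq]

end Submodule

theorem torus_quotient_is_quasitorus_general
    {𝔱 : Type*} [AddCommGroup 𝔱] [Module ℝ 𝔱]
    {ι : Type*} (b : Module.Basis ι ℝ 𝔱)
    (L : AddSubgroup 𝔱) (hL : L = AddSubgroup.closure (Set.range b))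
    (𝔫 𝔡 : Submodule ℝ 𝔱) (hcompl : IsCompl 𝔡 𝔫)
    (N : AddSubgroup (𝔱 ⧸ L))
    (hN : N = AddSubgroup.map (QuotientAddGroup.mk' L) 𝔫.toAddSubgroup)
    (π𝔡 : 𝔱 →ₗ[ℝ] ↥𝔡) (hπ𝔡 : π𝔡 = 𝔡.linearProjOfIsCompl 𝔫 hcompl)
    (p : ↥𝔡 →+ (𝔱 ⧸ L) ⧸ N)
    (hp : p = (QuotientAddGroup.mk' N).comp
      ((QuotientAddGroup.mk' L).comp 𝔡.subtype.toAddMonoidHom))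
    (Q : AddSubgroup ↥𝔡) (hQ : Q = AddSubgroup.map π𝔡.toAddMonoidHom L) :
    Function.Surjective p ∧
    p.ker = Q ∧
    (∃ e : (↥𝔡 ⧸ Q) ≃+ ((𝔱 ⧸ L) ⧸ N),
      ∀ x : ↥𝔡, e (QuotientAddGroup.mk x) = p x) ∧
    Q = AddSubgroup.closure (Set.range fun i => π𝔡 (b i)) ∧
    Submodule.span ℝ (Set.range fun i => π𝔡 (b i)) = ⊤ := by
  replace hπ𝔡 : π𝔡 = 𝔡.projectionOnto 𝔫 hcompl := hπ𝔡
  subst hN hπ𝔡 hp hQ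
  set f := (mk' (𝔫.toAddSubgroup.map (mk' L))).comp (mk' L)
  have hker_f : f.ker = L ⊔ 𝔫.toAddSubgroup := ker_mk'_map_comp_mk' L _
  have hsurj : Function.Surjective (f.comp 𝔡.subtype.toAddMonoidHom) :=
    Submodule.surjective_comp_subtype_of_le_ker hcompl (hker_f ▸ le_sup_right)
      ((mk'_surjective _).comp (mk'_surjective L))
  have hker := Submodule.ker_comp_subtype_eq_map_projectionOnto hcompl hker_f
  refine ⟨hsurj, hker, ⟨(quotientAddEquivOfEq hker.symm).trans
    (quotientKerEquivOfSurjective _ hsurj), fun _ => rfl⟩, ?_, ?_⟩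
  · rw [hL, AddMonoidHom.map_closure, ← Set.range_comp]
    rfl
  · exact Submodule.span_range_comp_eq_top_of_surjective b.span_eq
      (Submodule.projectionOnto_surjective hcompl)

/-- The quotient of a torus `T = 𝔱/L` by the connected Lie subgroup `N` with Lie
algebra `𝔫 ⊆ 𝔱` is a quasitorus: choosing a complement `𝔡` of `𝔫` and letting
`π𝔡` be the projection onto `𝔡` with kernel `𝔫`, the composite
`p : 𝔡 → 𝔱 → T → T/N` is a surjective group homomorphism with kernel
`Q = π𝔡(L)`, hence induces a group isomorphism `𝔡/Q ≅ T/N`; moreover `Q` is a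
quasilattice in `𝔡`: it is generated over `ℤ` by the vectors `π𝔡(b i)`, which
span `𝔡` over `ℝ`. -/
theorem torus_quotient_is_quasitorus
    {𝔱 : Type*} [AddCommGroup 𝔱] [Module ℝ 𝔱] [FiniteDimensional ℝ 𝔱]
    {ι : Type*} [Fintype ι] (b : Module.Basis ι ℝ 𝔱)
    (L : AddSubgroup 𝔱) (hL : L = AddSubgroup.closure (Set.range b))
    (𝔫 𝔡 : Submodule ℝ 𝔱) (hcompl : IsCompl 𝔡 𝔫)
    (N : AddSubgroup (𝔱 ⧸ L))
    (hN : N = AddSubgroup.map (QuotientAddGroup.mk' L) 𝔫.toAddSubgroup)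
    (π𝔡 : 𝔱 →ₗ[ℝ] ↥𝔡) (hπ𝔡 : π𝔡 = 𝔡.linearProjOfIsCompl 𝔫 hcompl)
    (p : ↥𝔡 →+ (𝔱 ⧸ L) ⧸ N)
    (hp : p = (QuotientAddGroup.mk' N).comp
      ((QuotientAddGroup.mk' L).comp 𝔡.subtype.toAddMonoidHom))
    (Q : AddSubgroup ↥𝔡) (hQ : Q = AddSubgroup.map π𝔡.toAddMonoidHom L) :
    Function.Surjective p ∧
    p.ker = Q ∧
    (∃ e : (↥𝔡 ⧸ Q) ≃+ ((𝔱 ⧸ L) ⧸ N),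
      ∀ x : ↥𝔡, e (QuotientAddGroup.mk x) = p x) ∧
    Q = AddSubgroup.closure (Set.range fun i => π𝔡 (b i)) ∧
    Submodule.span ℝ (Set.range fun i => π𝔡 (b i)) = ⊤ :=
  torus_quotient_is_quasitorus_general b L hL 𝔫 𝔡 hcompl N hN π𝔡 hπ𝔡 p hp Q hQ
end

section
/- Let 𝔱 be a finite-dimensional real vector space, let B be a basis of 𝔱, let L be the additive subgroup of 𝔱 generated by B, and let T := 𝔱/L with the quotient topology. Let 𝔫 ⊆ 𝔱 be a linear subspace, let N be the image of 𝔫 under the projection 𝔱 → T, let 𝔡 be a linear complement of 𝔫 in 𝔱, and let π_𝔡 : 𝔱 → 𝔡 be the linear projection with kernel 𝔫. If N is closed in T (equivalently, compact), then Q := π_𝔡(L) is a discrete subgroup of 𝔡 which spans 𝔡 over ℝ; that is, Q is a lattice in 𝔡. (This is the paper's parenthetical claim that the kernel Q of p_𝔡 : 𝔡 → T/N is a lattice when N is compact.) -/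
/-!
The image `Q = π𝔡(L)` is exactly the set of `y ∈ 𝔡` whose class in `𝔱/L` lies in `N`, so `Q` is
closed when `N` is. It is also countable, as the image of `L ≅ ℤ^ι`. A closed subgroup of `𝔡` is
complete, hence a Baire space, and a countable Baire space has an isolated point; by homogeneity
`Q` is discrete. Finally `Q` spans `𝔡` because `L` spans `𝔱` and `π𝔡` is onto.
-/

theorem discreteTopology_of_countable_of_baireSpace {G : Type*} [AddGroup G] [TopologicalSpace G]
    [ContinuousConstVAdd G G] [T1Space G] [BaireSpace G] [Countable G] : DiscreteTopology G := by
  obtain ⟨g, hg⟩ := nonempty_interior_of_iUnion_of_closed (fun g : G ↦ isClosed_singleton)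
    (Set.iUnion_of_singleton G)
  rw [AddAction.IsPretransitive.discreteTopology_iff G g, ← interior_eq_iff_isOpen]
  obtain ⟨x, hx⟩ := hg
  obtain rfl : x = g := Set.mem_singleton_iff.mp (interior_subset hx)
  exact interior_subset.antisymm (Set.singleton_subset_iff.mpr hx)

theorem AddSubgroup.discreteTopology_of_isClosed_of_countable {E : Type*} [AddGroup E]
    [MetricSpace E] [CompleteSpace E] [IsTopologicalAddGroup E] {H : AddSubgroup E}
    (hclosed : IsClosed (H : Set E)) (hcount : (H : Set E).Countable) : DiscreteTopology H :=
  have : CompleteSpace H := hclosed.completeSpace_coe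
  have : Countable H := hcount.to_subtype
  discreteTopology_of_countable_of_baireSpace

namespace Submodule

variable {R E : Type*} [Ring R] [AddCommGroup E] [Module R E] {p q : Submodule R E}

theorem projectionOnto_eq_iff (h : IsCompl p q) {x : E} {y : p} :
    p.projectionOnto q h x = y ↔ x - y ∈ q := by
  rw [← projectionOnto_apply_eq_zero_iff h, map_sub, projectionOnto_apply_left, sub_eq_zero]

theorem mem_map_projectionOnto_iff (h : IsCompl p q) (L : AddSubgroup E) (y : p) :
    y ∈ L.map (p.projectionOnto q h).toAddMonoidHom ↔
      ((y : E) : E ⧸ L) ∈ q.toAddSubgroup.map (QuotientAddGroup.mk' L) := by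
  simp only [AddSubgroup.mem_map, LinearMap.toAddMonoidHom_coe, projectionOnto_eq_iff,
    mem_toAddSubgroup, QuotientAddGroup.mk'_apply, QuotientAddGroup.eq_iff_sub_mem]
  constructor
  · rintro ⟨l, hl, hlq⟩
    exact ⟨y - l, by simpa using q.neg_mem hlq, by simpa using L.neg_mem hl⟩
  · rintro ⟨m, hm, hmL⟩
    exact ⟨y - m, by simpa using L.neg_mem hmL, by simpa using q.neg_mem hm⟩

theorem isClosed_map_projectionOnto [TopologicalSpace E] (h : IsCompl p q) {L : AddSubgroup E}
    (hclosed : IsClosed (q.toAddSubgroup.map (QuotientAddGroup.mk' L) : Set (E ⧸ L))) :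
    IsClosed (L.map (p.projectionOnto q h).toAddMonoidHom : Set p) := by
  have : (L.map (p.projectionOnto q h).toAddMonoidHom : Set p) =
      (fun y : p ↦ ((y : E) : E ⧸ L)) ⁻¹' (q.toAddSubgroup.map (QuotientAddGroup.mk' L)) :=
    Set.ext (mem_map_projectionOnto_iff h L)
  rw [this]
  exact hclosed.preimage (continuous_quotient_mk'.comp continuous_subtype_val)

end Submodule

/-- If the connected subgroup `N ⊆ T = 𝔱/L` determined by the subspace `𝔫` is
closed in the torus `T`, then the kernel `Q = π𝔡(L)` of `p : 𝔡 → T/N` is a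
lattice in the complement `𝔡`: it is a discrete subgroup of `𝔡` spanning `𝔡`
over `ℝ`. -/
theorem kernel_is_lattice_of_closed {n : ℕ}
    {ι : Type*} [Fintype ι] (b : Module.Basis ι ℝ (Fin n → ℝ))
    (L : AddSubgroup (Fin n → ℝ)) (hL : L = AddSubgroup.closure (Set.range b))
    (𝔫 𝔡 : Submodule ℝ (Fin n → ℝ)) (hcompl : IsCompl 𝔡 𝔫)
    (N : AddSubgroup ((Fin n → ℝ) ⧸ L))
    (hN : N = AddSubgroup.map (QuotientAddGroup.mk' L) 𝔫.toAddSubgroup)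
    (hNclosed : IsClosed (N : Set ((Fin n → ℝ) ⧸ L)))
    (Q : AddSubgroup ↥𝔡)
    (hQ : Q = AddSubgroup.map (𝔡.linearProjOfIsCompl 𝔫 hcompl).toAddMonoidHom L) :
    DiscreteTopology ↥Q ∧ Submodule.span ℝ (Q : Set ↥𝔡) = ⊤ := by
  subst hN hQ
  have hLcount : (L : Set (Fin n → ℝ)).Countable := by
    rw [hL, ← Submodule.span_int_eq_addSubgroupClosure]
    exact Set.countable_coe_iff.mp (inferInstanceAs (Countable (Submodule.span ℤ (Set.range b))))
  refine ⟨AddSubgroup.discreteTopology_of_isClosed_of_countable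
    (Submodule.isClosed_map_projectionOnto hcompl hNclosed) (hLcount.image _), ?_⟩
  have hspan : Submodule.span ℝ (L : Set (Fin n → ℝ)) = ⊤ :=
    eq_top_mono (Submodule.span_mono (hL ▸ AddSubgroup.subset_closure)) b.span_eq
  rw [AddSubgroup.coe_map, LinearMap.toAddMonoidHom_coe, Submodule.span_image, hspan,
    Submodule.map_top]
  exact Submodule.range_projectionOnto hcompl
end

section
/- Let π : X → Y be a covering map, where X is a nonempty, path-connected, locally path-connected, simply connected topological space and Y is a connected, locally path-connected Hausdorff space. Let Γ be a group acting faithfully on Y by homeomorphisms, and define Λ := { λ ∈ Homeo(X) : there exists γ ∈ Γ with π(λ(x)) = γ • π(x) for all x ∈ X }, acting on X in the obvious way. Then the map sending the Λ-orbit of x ∈ X to the Γ-orbit of π(x) ∈ Y is well defined and is a homeomorphism from the orbit space X/Λ onto the orbit space Y/Γ, where both orbit spaces carry the quotient topology. (This is the paper's claim that Ũ/Γ = U^#/Λ for the universal cover U^# of Ũ.) -/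
/-!
Every homeomorphism `γ • ·` of `Y` lifts through the universal covering `π`, and the lift may be
chosen to send any point `x` to any point of the fibre over `γ • π x`; hence `π x` and `π x'`
lie in one `Γ`-orbit exactly when `x` and `x'` lie in one `Λ`-orbit. So `x ↦ [π x]` descends to
a continuous bijection `X/Λ → Y/Γ`, and it is a quotient map because `π` is a surjective open
map.
-/

open Topology

namespace IsCoveringMap

variable {E B : Type*} [TopologicalSpace E] [TopologicalSpace B] {p : E → B}

theorem isClopen_range (hp : IsCoveringMap p) : IsClopen (Set.range p) := by
  refine ⟨?_, hp.isOpenMap.isOpen_range⟩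
  rw [← isOpen_compl_iff, isOpen_iff_forall_mem_open]
  intro b hb
  obtain ⟨-, U, hbU, hU, -, H, -⟩ := hp b
  refine ⟨U, ?_, hU, hbU⟩
  rintro _ hy ⟨e, rfl⟩
  obtain ⟨i, hi⟩ := (H ⟨e, hy⟩).2
  exact hb ⟨i, hi⟩

theorem surjective [Nonempty E] [ConnectedSpace B] (hp : IsCoveringMap p) :
    Function.Surjective p :=
  Set.range_eq_univ.mp (hp.isClopen_range.eq_univ (Set.range_nonempty p))

/-- The two lifts are mutually inverse because lifts through a covering map are determined by
their value at one point. -/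
theorem exists_homeomorph_lift [SimplyConnectedSpace E] [LocallyPathConnectedSpace E]
    (hp : IsCoveringMap p) (φ : B ≃ₜ B) {e e' : E} (h : p e' = φ (p e)) :
    ∃ l : E ≃ₜ E, p ∘ l = φ ∘ p ∧ l e = e' := by
  obtain ⟨⟨l, hl⟩, ⟨hle, hlp⟩, -⟩ := hp.existsUnique_continuousMap_lifts
    ((φ : C(B, B)).comp ⟨p, hp.continuous⟩) e e' h
  obtain ⟨⟨m, hm⟩, ⟨hme, hmp⟩, -⟩ := hp.existsUnique_continuousMap_lifts
    ((φ.symm : C(B, B)).comp ⟨p, hp.continuous⟩) e' e (by simp [h])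
  have hlp' : ∀ z, p (l z) = φ (p z) := congrFun hlp
  have hmp' : ∀ z, p (m z) = φ.symm (p z) := congrFun hmp
  have hle' : l e = e' := hle
  have hme' : m e' = e := hme
  have hml : m ∘ l = id :=
    hp.eq_of_comp_eq (hm.comp hl) continuous_id (funext fun z => by simp [hmp', hlp']) e
      (by simp [hle', hme'])
  have hlm : l ∘ m = id :=
    hp.eq_of_comp_eq (hl.comp hm) continuous_id (funext fun z => by simp [hmp', hlp']) e'
      (by simp [hle', hme'])
  exact ⟨⟨⟨l, m, congrFun hml, congrFun hlm⟩, hl, hm⟩, hlp, hle⟩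

end IsCoveringMap

theorem Topology.IsQuotientMap.isHomeomorph_quotLift {X Z : Type*} [TopologicalSpace X]
    [TopologicalSpace Z] {f : X → Z} (hf : IsQuotientMap f) {r : X → X → Prop}
    (hr : ∀ x x', r x x' → f x = f x') (hinj : ∀ x x', f x = f x' → Quot.mk r x = Quot.mk r x') :
    IsHomeomorph (Quot.lift f hr) := by
  refine isHomeomorph_iff_isQuotientMap_injective.mpr ⟨?_, ?_⟩
  · exact isQuotientMap_quot_mk.of_comp_isQuotientMap hf
  · rintro ⟨x⟩ ⟨x'⟩ h
    exact hinj x x' h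

theorem MulAction.exists_smul_eq_of_quot_mk_eq {G α : Type*} [Group G] [MulAction G α]
    {r : α → α → Prop} (hr : ∀ a b, r a b ↔ ∃ g : G, g • a = b) {a b : α}
    (h : Quot.mk r a = Quot.mk r b) : ∃ g : G, g • a = b := by
  have hequiv : Equivalence r := by
    refine ⟨fun a => (hr a a).mpr ⟨1, one_smul G a⟩, fun hab => ?_, fun hab hbc => ?_⟩
    · obtain ⟨g, rfl⟩ := (hr _ _).mp hab
      exact (hr _ _).mpr ⟨g⁻¹, inv_smul_smul g _⟩
    · obtain ⟨g, rfl⟩ := (hr _ _).mp hab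
      obtain ⟨g', rfl⟩ := (hr _ _).mp hbc
      exact (hr _ _).mpr ⟨g' * g, mul_smul g' g _⟩
  exact (hr a b).mp (hequiv.eqvGen_iff.mp (Quot.eq.mp h))

theorem orbit_space_homeomorph_general {X Y : Type*} [TopologicalSpace X] [TopologicalSpace Y]
    [LocallyPathConnectedSpace X] [SimplyConnectedSpace X]
    [ConnectedSpace Y]
    {Γ : Type*} [Group Γ] [MulAction Γ Y] [ContinuousConstSMul Γ Y]
    (π : X → Y) (hπ : IsCoveringMap π)
    (rX : X → X → Prop)
    (hrX : ∀ x x' : X, rX x x' ↔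
      ∃ l : X ≃ₜ X, (∃ γ : Γ, ∀ z : X, π (l z) = γ • π z) ∧ l x = x')
    (rY : Y → Y → Prop)
    (hrY : ∀ y y' : Y, rY y y' ↔ ∃ γ : Γ, γ • y = y') :
    ∃ h : Quot rX ≃ₜ Quot rY, ∀ x : X, h (Quot.mk rX x) = Quot.mk rY (π x) := by
  have hquot : IsQuotientMap (Quot.mk rY ∘ π) :=
    isQuotientMap_quot_mk.comp (hπ.isQuotientMap hπ.surjective)
  have hr : ∀ x x', rX x x' → Quot.mk rY (π x) = Quot.mk rY (π x') := by
    intro x x' h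
    obtain ⟨l, ⟨γ, hl⟩, rfl⟩ := (hrX x x').mp h
    exact Quot.sound ((hrY _ _).mpr ⟨γ, (hl x).symm⟩)
  have hinj : ∀ x x', Quot.mk rY (π x) = Quot.mk rY (π x') → Quot.mk rX x = Quot.mk rX x' := by
    intro x x' h
    obtain ⟨γ, hγ⟩ := MulAction.exists_smul_eq_of_quot_mk_eq hrY h
    obtain ⟨l, hl, hlx⟩ := hπ.exists_homeomorph_lift (Homeomorph.smul γ) hγ.symm
    exact Quot.sound ((hrX x x').mpr ⟨l, ⟨γ, congrFun hl⟩, hlx⟩)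
  exact ⟨(hquot.isHomeomorph_quotLift hr hinj).homeomorph, fun _ => rfl⟩

/-- Given a covering `π : X → Y` of a connected space by a simply connected one and an
action of a group `Γ` on `Y` by homeomorphisms, let `Λ` be the collection of
homeomorphisms of `X` lying over some element of `Γ`. Then the map sending the
`Λ`-orbit of `x` to the `Γ`-orbit of `π x` is a well-defined homeomorphism of the
orbit space `X/Λ` onto the orbit space `Y/Γ` (both with the quotient topology). -/
theorem orbit_space_homeomorph {X Y : Type*} [TopologicalSpace X] [TopologicalSpace Y]
    [Nonempty X] [PathConnectedSpace X] [LocallyPathConnectedSpace X] [SimplyConnectedSpace X]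
    [ConnectedSpace Y] [LocallyPathConnectedSpace Y] [T2Space Y]
    {Γ : Type*} [Group Γ] [MulAction Γ Y] [ContinuousConstSMul Γ Y] [FaithfulSMul Γ Y]
    (π : X → Y) (hπ : IsCoveringMap π)
    (rX : X → X → Prop)
    (hrX : ∀ x x' : X, rX x x' ↔
      ∃ l : X ≃ₜ X, (∃ γ : Γ, ∀ z : X, π (l z) = γ • π z) ∧ l x = x')
    (rY : Y → Y → Prop)
    (hrY : ∀ y y' : Y, rY y y' ↔ ∃ γ : Γ, γ • y = y') :
    ∃ h : Quot rX ≃ₜ Quot rY, ∀ x : X, h (Quot.mk rX x) = Quot.mk rY (π x) :=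
  orbit_space_homeomorph_general π hπ rX hrX rY hrY
end

section
/- Let 𝔱 and V be finite-dimensional real vector spaces, let 𝔫 ⊆ 𝔱 be a linear subspace, let ω : V × V → ℝ be a bilinear form, let A : 𝔱 → V be a linear map, and let L : V → 𝔫* be a linear map into the dual of 𝔫 satisfying (L v)(X) = ω(A X, v) for all X ∈ 𝔫 and all v ∈ V. If L is surjective, then 𝔫 ∩ ker A = {0}. (This is the linear-algebraic step in the proof of the symplectic reduction theorem: if 0 is a regular value of the moment map Ψ of the subgroup N, then at each point x of Ψ⁻¹(0) the isotropy algebra 𝔱_x intersects 𝔫 = Lie(N) trivially; here A X is the value at x of the fundamental vector field of X and L is the differential dΨ_x.) -/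
/-- The linear-algebraic step in the symplectic reduction theorem: if
`L : V → 𝔫*` satisfies `(L v) X = ω (A X) v` for `X ∈ 𝔫` and is surjective, then
`𝔫 ∩ ker A = {0}` (the isotropy algebra meets `𝔫 = Lie N` trivially at points of
the zero level set of the moment map of `N`). -/
theorem isotropy_meets_lie_subalgebra_trivially
    {𝔱 V : Type*} [AddCommGroup 𝔱] [Module ℝ 𝔱] [FiniteDimensional ℝ 𝔱]
    [AddCommGroup V] [Module ℝ V] [FiniteDimensional ℝ V]
    (𝔫 : Submodule ℝ 𝔱) (ω : V →ₗ[ℝ] V →ₗ[ℝ] ℝ) (A : 𝔱 →ₗ[ℝ] V)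
    (L : V →ₗ[ℝ] Module.Dual ℝ ↥𝔫)
    (hL : ∀ (X : ↥𝔫) (v : V), L v X = ω (A (X : 𝔱)) v)
    (hsurj : Function.Surjective L) :
    𝔫 ⊓ LinearMap.ker A = ⊥ := by
  rw [eq_bot_iff]
  rintro x ⟨hx𝔫, hxA⟩
  rw [Submodule.mem_bot]
  have : (⟨x, hx𝔫⟩ : 𝔫) = 0 := by
    rw [← Module.forall_dual_apply_eq_zero_iff ℝ]
    intro f
    obtain ⟨v, hv⟩ := hsurj f
    rw [← hv, hL]
    simp [LinearMap.mem_ker.mp hxA]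
  simpa using congrArg Subtype.val this
end

section
/- Let 𝔡 be a finite-dimensional real vector space, let X₁, …, X_d ∈ 𝔡 span 𝔡 over ℝ, let λ₁, …, λ_d ∈ ℝ, and let Δ := { μ ∈ 𝔡* : ⟨μ, X_j⟩ ≥ λ_j for j = 1, …, d }. Let π : ℝᵈ → 𝔡 be the surjective linear map sending the j-th standard basis vector e_j to X_j, and let Z := { z ∈ ℂᵈ : Σ_{j=1}^d (|z_j|² + λ_j) Y_j = 0 for every Y = (Y₁, …, Y_d) ∈ ker π }. Define J : ℂᵈ → ℝᵈ by J(z) := (|z_1|² + λ_1, …, |z_d|² + λ_d). Then J(Z) = { (⟨μ, X_1⟩, …, ⟨μ, X_d⟩) : μ ∈ Δ }; in particular, for every z ∈ Z there is a unique μ ∈ Δ with |z_j|² + λ_j = ⟨μ, X_j⟩ for all j, and every μ ∈ Δ arises in this way. (This is the key step of the extended Delzant construction: the image of the induced moment mapping on the reduced space Z/N is exactly the polytope Δ.) -/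
/-!
A vector `v ∈ ℝᵈ` annihilates `ker π` exactly when the functional `Y ↦ ∑ vⱼ Yⱼ` factors
through `π`, i.e. when `vⱼ = ⟨μ, Xⱼ⟩` for some `μ ∈ 𝔡*`; since the `Xⱼ` span `𝔡`, such a `μ` is
unique. For `v = J(z)` the inequalities `vⱼ ≥ λⱼ` are automatic, and conversely any
`μ ∈ Δ` is hit by `zⱼ = √(⟨μ, Xⱼ⟩ - λⱼ)`.
-/

namespace LinearMap

variable {K V W : Type*} [Field K] [AddCommGroup V] [Module K V] [AddCommGroup W] [Module K W]

theorem exists_dual_comp_eq_iff_ker_le (π : V →ₗ[K] W) (f : Module.Dual K V) :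
    (∃ μ : Module.Dual K W, μ ∘ₗ π = f) ↔ ker π ≤ ker f := by
  change f ∈ range π.dualMap ↔ _
  rw [range_dualMap_eq_dualAnnihilator_ker, Submodule.mem_dualAnnihilator]
  rfl

theorem exists_dual_apply_single_eq_iff {ι : Type*} [Fintype ι] [DecidableEq ι]
    (π : (ι → K) →ₗ[K] W) (v : ι → K) :
    (∃ μ : Module.Dual K W, ∀ j, μ (π (Pi.single j 1)) = v j) ↔
      ∀ Y ∈ ker π, ∑ j, v j * Y j = 0 := by
  have hf : ∀ Y, Fintype.linearCombination K v Y = ∑ j, v j * Y j := fun Y => by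
    simp only [Fintype.linearCombination_apply, smul_eq_mul, mul_comm]
  have hcomp : ∀ μ : Module.Dual K W,
      μ ∘ₗ π = Fintype.linearCombination K v ↔ ∀ j, μ (π (Pi.single j 1)) = v j := fun μ => by
    constructor
    · intro h j
      simpa using LinearMap.congr_fun h (Pi.single j 1)
    · intro h
      refine (Pi.basisFun K ι).ext fun j => ?_
      simp [h]
  simp_rw [← hcomp, exists_dual_comp_eq_iff_ker_le, SetLike.le_def, mem_ker, hf]

end LinearMap

theorem exists_complex_norm_sq_add_eq {ι : Type*} {lam a : ι → ℝ} (h : ∀ j, lam j ≤ a j) :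
    ∃ z : ι → ℂ, ∀ j, ‖z j‖ ^ 2 + lam j = a j :=
  ⟨fun j => (√(a j - lam j) : ℝ), fun j => by
    rw [Complex.norm_real, Real.norm_eq_abs, sq_abs, Real.sq_sqrt (sub_nonneg.mpr (h j)),
      sub_add_cancel]⟩

theorem delzant_moment_image_general
    {𝔡 : Type*} [AddCommGroup 𝔡] [Module ℝ 𝔡]
    {d : ℕ} (X : Fin d → 𝔡) (hspan : Submodule.span ℝ (Set.range X) = ⊤)
    (lam : Fin d → ℝ)
    (Δ : Set (Module.Dual ℝ 𝔡)) (hΔ : Δ = {μ | ∀ j, lam j ≤ μ (X j)})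
    (proj : (Fin d → ℝ) →ₗ[ℝ] 𝔡) (hproj : ∀ j, proj (Pi.single j 1) = X j)
    (Z : Set (Fin d → ℂ))
    (hZ : Z = {z | ∀ Y ∈ LinearMap.ker proj,
      ∑ j, (‖z j‖ ^ 2 + lam j) * Y j = 0})
    (J : (Fin d → ℂ) → (Fin d → ℝ))
    (hJ : ∀ z j, J z j = ‖z j‖ ^ 2 + lam j) :
    J '' Z = (fun μ : Module.Dual ℝ 𝔡 => fun j => μ (X j)) '' Δ ∧
    (∀ z ∈ Z, ∃! μ : Module.Dual ℝ 𝔡, μ ∈ Δ ∧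
      ∀ j, ‖z j‖ ^ 2 + lam j = μ (X j)) ∧
    (∀ μ ∈ Δ, ∃ z ∈ Z, ∀ j, ‖z j‖ ^ 2 + lam j = μ (X j)) := by
  subst hΔ hZ
  have mem_Z : ∀ z : Fin d → ℂ, (∀ Y ∈ LinearMap.ker proj, ∑ j, (‖z j‖ ^ 2 + lam j) * Y j = 0) ↔
      ∃ μ : Module.Dual ℝ 𝔡, ∀ j, ‖z j‖ ^ 2 + lam j = μ (X j) := fun z => by
    rw [← LinearMap.exists_dual_apply_single_eq_iff proj]
    simp only [hproj, eq_comm]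
  have mem_Δ : ∀ (z : Fin d → ℂ) (μ : Module.Dual ℝ 𝔡),
      (∀ j, ‖z j‖ ^ 2 + lam j = μ (X j)) → ∀ j, lam j ≤ μ (X j) := fun z μ h j => by
    rw [← h j]
    linarith [sq_nonneg ‖z j‖]
  refine ⟨?_, fun z hz => ?_, fun μ hμ => ?_⟩
  · ext w
    simp only [Set.mem_image, Set.mem_ofPred_eq, mem_Z]
    constructor
    · rintro ⟨z, ⟨μ, hμ⟩, rfl⟩
      exact ⟨μ, mem_Δ z μ hμ, funext fun j => ((hJ z j).trans (hμ j)).symm⟩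
    · rintro ⟨μ, hμ, rfl⟩
      obtain ⟨z, hz⟩ := exists_complex_norm_sq_add_eq hμ
      exact ⟨z, ⟨μ, hz⟩, funext fun j => (hJ z j).trans (hz j)⟩
  · obtain ⟨μ, hμ⟩ := (mem_Z z).mp hz
    refine ⟨μ, ⟨mem_Δ z μ hμ, hμ⟩, fun μ' ⟨_, hμ'⟩ => ?_⟩
    exact LinearMap.ext_on_range hspan fun j => (hμ' j).symm.trans (hμ j)
  · obtain ⟨z, hz⟩ := exists_complex_norm_sq_add_eq hμ
    exact ⟨z, (mem_Z z).mpr ⟨μ, hz⟩, hz⟩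

/-- The key step of the extended Delzant construction: for the zero level set `Z` of
the moment map of `N = ker (Tᵈ → D)`, the image `J(Z)` of the translated moment map
`J(z) = (|z₁|² + λ₁, …, |z_d|² + λ_d)` is exactly the set of tuples
`(⟨μ, X₁⟩, …, ⟨μ, X_d⟩)` with `μ` in the polytope `Δ`; in particular every `z ∈ Z`
determines a unique `μ ∈ Δ`, and every `μ ∈ Δ` arises this way. -/
theorem delzant_moment_image
    {𝔡 : Type*} [AddCommGroup 𝔡] [Module ℝ 𝔡] [FiniteDimensional ℝ 𝔡]
    {d : ℕ} (X : Fin d → 𝔡) (hspan : Submodule.span ℝ (Set.range X) = ⊤)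
    (lam : Fin d → ℝ)
    (Δ : Set (Module.Dual ℝ 𝔡)) (hΔ : Δ = {μ | ∀ j, lam j ≤ μ (X j)})
    (proj : (Fin d → ℝ) →ₗ[ℝ] 𝔡) (hproj : ∀ j, proj (Pi.single j 1) = X j)
    (Z : Set (Fin d → ℂ))
    (hZ : Z = {z | ∀ Y ∈ LinearMap.ker proj,
      ∑ j, (‖z j‖ ^ 2 + lam j) * Y j = 0})
    (J : (Fin d → ℂ) → (Fin d → ℝ))
    (hJ : ∀ z j, J z j = ‖z j‖ ^ 2 + lam j) :
    J '' Z = (fun μ : Module.Dual ℝ 𝔡 => fun j => μ (X j)) '' Δ ∧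
    (∀ z ∈ Z, ∃! μ : Module.Dual ℝ 𝔡, μ ∈ Δ ∧
      ∀ j, ‖z j‖ ^ 2 + lam j = μ (X j)) ∧
    (∀ μ ∈ Δ, ∃ z ∈ Z, ∀ j, ‖z j‖ ^ 2 + lam j = μ (X j)) :=
  delzant_moment_image_general X hspan lam Δ hΔ proj hproj Z hZ J hJ
end

section
/- Let 𝔡 be a finite-dimensional real vector space, let X₁, …, X_d ∈ 𝔡 span 𝔡 over ℝ, let λ₁, …, λ_d ∈ ℝ, and let Δ := { μ ∈ 𝔡* : ⟨μ, X_j⟩ ≥ λ_j for j = 1, …, d }. Assume that for every μ ∈ Δ the family { X_j : ⟨μ, X_j⟩ = λ_j } is linearly independent (as holds for a simple convex polytope with irredundant presentation). Let π : ℝᵈ → 𝔡 be the surjective linear map with π(e_j) = X_j, let 𝔫 := ker π, and define Ψ : ℂᵈ → 𝔫* by Ψ(z)(Y) := Σ_{j=1}^d (|z_j|² + λ_j) Y_j for Y ∈ 𝔫. Then 0 is a regular value of Ψ: for every z ∈ ℂᵈ with Ψ(z) = 0, the Fréchet derivative of Ψ at z (as a map of real normed spaces ℂᵈ → 𝔫*)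 is surjective. -/
/-!
At a zero `z` of `Ψ`, the vector `(‖z_j‖² + λ_j)_j` annihilates `𝔫 = ker π`, so it is `μ ∘ π` for
some `μ ∈ 𝔡*`; this `μ` lies in `Δ` and its tight facets are exactly the `j` with `z_j = 0`.
The derivative of `Ψ` at `z` is `w ↦ ∑ j, 2⟪z_j, w_j⟫ Y_j`, whose image contains the coordinate
functionals `Y ↦ Y_j` on `𝔫` with `z_j ≠ 0`. These span `𝔫*` as soon as no nonzero `Y ∈ 𝔫` is
supported on `{j | z_j = 0}`, and such a `Y` would give the linear relation `∑ Y_j X_j = π Y = 0`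
among the facet normals tight at `μ`, which simplicity forbids.
-/

open Submodule LinearMap
open scoped InnerProductSpace

theorem span_image_proj_comp_subtype_eq_top {K ι : Type*} [Field K] [Finite ι]
    (N : Submodule K (ι → K)) (S : Set ι) (h : ∀ Y ∈ N, (∀ j ∈ S, Y j = 0) → Y = 0) :
    span K ((fun j => LinearMap.proj j ∘ₗ N.subtype) '' S) = ⊤ := by
  refine span_eq_top_of_ne_zero fun Y hY => ?_
  by_contra! hS
  exact hY (Subtype.ext (h Y Y.2 fun j hj => hS _ ⟨j, hj, rfl⟩))

theorem eq_zero_of_sum_smul_eq_zero_of_linearIndependent {K V ι : Type*} [Ring K]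
    [AddCommGroup V] [Module K V] [Fintype ι] {X : ι → V} {p : ι → Prop}
    (hX : LinearIndependent K fun j : {j // p j} => X j) {Y : ι → K}
    (hY : ∀ j, ¬p j → Y j = 0) (hsum : ∑ j, Y j • X j = 0) : Y = 0 := by
  classical
  have hsub : ∑ j : {j // p j}, Y j • X j = 0 := by
    have hsplit := Fintype.sum_subtype_add_sum_subtype p fun j => Y j • X j
    rwa [hsum, Fintype.sum_eq_zero (fun j : {j // ¬p j} => Y j • X j) fun j => by
      simp [hY j j.2], add_zero] at hsplit
  funext j
  by_cases hj : p j
  · exact Fintype.linearIndependent_iff.1 hX _ hsub ⟨j, hj⟩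
  · exact hY j hj

theorem LinearMap.pi_apply_eq_sum_smul_single {K V ι : Type*} [Semiring K] [AddCommMonoid V]
    [Module K V] [Fintype ι] [DecidableEq ι] (f : (ι → K) →ₗ[K] V) (Y : ι → K) :
    f Y = ∑ j, Y j • f (Pi.single j 1) := by
  simp_rw [← map_smul, ← map_sum, ← Pi.single_smul, smul_eq_mul, mul_one, Finset.univ_sum_single]

section InnerProduct

variable {ι E F : Type*} [Fintype ι] [NormedAddCommGroup E] [InnerProductSpace ℝ E]
  [NormedAddCommGroup F] [NormedSpace ℝ F]

theorem hasFDerivAt_sum_norm_sq_add_smul (a : ι → ℝ) (φ : ι → F) (z : ι → E) :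
    HasFDerivAt (fun w : ι → E => ∑ j, (‖w j‖ ^ 2 + a j) • φ j)
      (∑ j, (2 • (innerSL ℝ (z j)).comp (ContinuousLinearMap.proj j)).smulRight (φ j)) z :=
  HasFDerivAt.fun_sum fun j _ =>
    (((hasFDerivAt_apply j z).norm_sq).add_const (a j)).smul_const (φ j)

theorem fderiv_sum_norm_sq_add_smul_apply (a : ι → ℝ) (φ : ι → F) (z w : ι → E) :
    fderiv ℝ (fun w : ι → E => ∑ j, (‖w j‖ ^ 2 + a j) • φ j) z w =
      ∑ j, (2 * ⟪z j, w j⟫_ℝ) • φ j := by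
  simp [(hasFDerivAt_sum_norm_sq_add_smul a φ z).fderiv]

theorem span_image_le_range_fderiv_sum_norm_sq_add_smul (a : ι → ℝ) (φ : ι → F) (z : ι → E) :
    span ℝ (φ '' {j | z j ≠ 0}) ≤
      LinearMap.range
        (fderiv ℝ (fun w : ι → E => ∑ j, (‖w j‖ ^ 2 + a j) • φ j) z : (ι → E) →ₗ[ℝ] F) := by
  classical
  rw [span_le]
  rintro _ ⟨j, hj, rfl⟩
  refine ⟨Pi.single j ((2 * ‖z j‖ ^ 2)⁻¹ • z j), ?_⟩
  rw [ContinuousLinearMap.coe_coe, fderiv_sum_norm_sq_add_smul_apply,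
    Finset.sum_eq_single j (fun k _ hk => by simp [hk]) (by simp), Pi.single_eq_same,
    real_inner_smul_right, real_inner_self_eq_norm_sq]
  have : ‖z j‖ ≠ 0 := norm_ne_zero_iff.2 hj
  convert one_smul ℝ (φ j) using 2
  field_simp

end InnerProduct

theorem eq_zero_of_mem_ker_of_simple {V ι : Type*} [AddCommGroup V] [Module ℝ V] [Fintype ι]
    [DecidableEq ι] (X : ι → V) (lam : ι → ℝ)
    (hsimple : ∀ μ : Module.Dual ℝ V, (∀ j, lam j ≤ μ (X j)) →
      LinearIndependent ℝ (fun j : {j // μ (X j) = lam j} => X (j : ι)))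
    (proj : (ι → ℝ) →ₗ[ℝ] V) (hproj : ∀ j, proj (Pi.single j 1) = X j) {c : ι → ℝ}
    (hc : ∀ j, 0 ≤ c j) (hker : ∀ Y ∈ ker proj, ∑ j, (c j + lam j) * Y j = 0) {Y : ι → ℝ}
    (hY : Y ∈ ker proj) (hYc : ∀ j, c j ≠ 0 → Y j = 0) : Y = 0 := by
  obtain ⟨μ, hμ⟩ : (∑ j, (c j + lam j) • LinearMap.proj j : Module.Dual ℝ (ι → ℝ)) ∈
      range proj.dualMap := by
    rw [range_dualMap_eq_dualAnnihilator_ker, mem_dualAnnihilator]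
    intro Y hY
    simpa [mul_comm] using hker Y hY
  have hμX : ∀ j, μ (X j) = c j + lam j := fun j => by
    rw [← hproj, ← LinearMap.dualMap_apply, hμ]
    simp [Pi.single_apply]
  refine eq_zero_of_sum_smul_eq_zero_of_linearIndependent
    (hsimple μ fun j => by simpa [hμX] using hc j)
    (fun j hj => hYc j (by simpa [hμX] using hj)) ?_
  simpa [← hproj, ← LinearMap.pi_apply_eq_sum_smul_single] using hY

theorem delzant_zero_regular_value_general
    {𝔡 : Type*} [AddCommGroup 𝔡] [Module ℝ 𝔡]
    {d : ℕ} (X : Fin d → 𝔡)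
    (lam : Fin d → ℝ)
    (hsimple : ∀ μ : Module.Dual ℝ 𝔡, (∀ j, lam j ≤ μ (X j)) →
      LinearIndependent ℝ (fun j : {j : Fin d // μ (X j) = lam j} => X (j : Fin d)))
    (proj : (Fin d → ℝ) →ₗ[ℝ] 𝔡) (hproj : ∀ j, proj (Pi.single j 1) = X j)
    (Ψ : (Fin d → ℂ) → (↥(LinearMap.ker proj) →L[ℝ] ℝ))
    (hΨ : ∀ (z : Fin d → ℂ) (Y : ↥(LinearMap.ker proj)),
      Ψ z Y = ∑ j, (‖z j‖ ^ 2 + lam j) * (Y : Fin d → ℝ) j) :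
    ∀ z : Fin d → ℂ, Ψ z = 0 → Function.Surjective (fderiv ℝ Ψ z) := by
  intro z hz
  let φ : Fin d → (ker proj →L[ℝ] ℝ) := fun j =>
    LinearMap.toContinuousLinearMap (LinearMap.proj j ∘ₗ (ker proj).subtype)
  have hΨφ : Ψ = fun w => ∑ j, (‖w j‖ ^ 2 + lam j) • φ j := by
    funext w; ext Y; simp [hΨ, φ]
  have hvanish : ∀ Y ∈ ker proj, (∀ j ∈ {j | z j ≠ 0}, Y j = 0) → Y = 0 := fun Y hY hYz =>
    eq_zero_of_mem_ker_of_simple X lam hsimple proj hproj (c := fun j => ‖z j‖ ^ 2)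
      (fun j => by positivity) (fun Y hY => by simpa [hΨ] using congr($hz ⟨Y, hY⟩)) hY
      (fun j hj => hYz j (by simpa using hj))
  have hspan : span ℝ (φ '' {j | z j ≠ 0}) = ⊤ := by
    rw [← Set.image_image (g := LinearMap.toContinuousLinearMap), span_image_linearEquiv,
      span_image_proj_comp_subtype_eq_top _ _ hvanish, Submodule.map_top, LinearEquiv.range]
  rw [← ContinuousLinearMap.coe_coe, ← LinearMap.range_eq_top, eq_top_iff, ← hspan, hΨφ]
  exact span_image_le_range_fderiv_sum_norm_sq_add_smul lam φ z

/-- If the polytope `Δ = {μ ∈ 𝔡* : ⟨μ, X_j⟩ ≥ λ_j}` is such that the normal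
vectors of the facets through any of its points are linearly independent (as holds
for a simple polytope with irredundant presentation), then `0` is a regular value
of the moment map `Ψ(z)(Y) = Σ_j (|z_j|² + λ_j) Y_j` of `N = ker (Tᵈ → D)`: at
every point of `Ψ⁻¹(0)` the Fréchet derivative of `Ψ` is surjective. -/
theorem delzant_zero_regular_value
    {𝔡 : Type*} [AddCommGroup 𝔡] [Module ℝ 𝔡] [FiniteDimensional ℝ 𝔡]
    {d : ℕ} (X : Fin d → 𝔡) (hspan : Submodule.span ℝ (Set.range X) = ⊤)
    (lam : Fin d → ℝ)
    (hsimple : ∀ μ : Module.Dual ℝ 𝔡, (∀ j, lam j ≤ μ (X j)) →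
      LinearIndependent ℝ (fun j : {j : Fin d // μ (X j) = lam j} => X (j : Fin d)))
    (proj : (Fin d → ℝ) →ₗ[ℝ] 𝔡) (hproj : ∀ j, proj (Pi.single j 1) = X j)
    (Ψ : (Fin d → ℂ) → (↥(LinearMap.ker proj) →L[ℝ] ℝ))
    (hΨ : ∀ (z : Fin d → ℂ) (Y : ↥(LinearMap.ker proj)),
      Ψ z Y = ∑ j, (‖z j‖ ^ 2 + lam j) * (Y : Fin d → ℝ) j) :
    ∀ z : Fin d → ℂ, Ψ z = 0 → Function.Surjective (fderiv ℝ Ψ z) :=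
  delzant_zero_regular_value_general X lam hsimple proj hproj Ψ hΨ
end

section
/- Let 𝔡 be a finite-dimensional real vector space, let X₁, …, X_d ∈ 𝔡 span 𝔡 over ℝ, let λ₁, …, λ_d ∈ ℝ, let π : ℝᵈ → 𝔡 be the surjective linear map with π(e_j) = X_j, and let Z := { z ∈ ℂᵈ : Σ_{j=1}^d (|z_j|² + λ_j) Y_j = 0 for every Y ∈ ker π }. If there exists μ ∈ 𝔡* with ⟨μ, X_j⟩ > λ_j for all j = 1, …, d, then there exists z ∈ Z with z_j ≠ 0 for every j; moreover, for any such z the stabilizer of z under the coordinatewise rotation action of the torus Tᵈ = ℝᵈ/ℤᵈ on ℂᵈ (given by θ • z = (e^{2πiθ_1} z_1, …, e^{2πiθ_d} z_d)) is trivial. (This is the step in the proof of the extended Delzant theorem showing that the level set Ψ⁻¹(0) contains points where the Tᵈ-action is free, whence the induced quasitorus action on the reduced space is effective.) -/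
/-! Since `⟨μ, X_j⟩ - λ_j > 0`, the point `z_j = √(⟨μ, X_j⟩ - λ_j)` has all coordinates nonzero,
and `Σ_j (|z_j|² + λ_j) Y_j = μ (π Y)` vanishes on `ker π`. At a point with no zero coordinate,
`e^{2πiθ_j} z_j = z_j` forces `e^{2πiθ_j} = 1`, i.e. `θ_j ∈ ℤ`. -/

open Complex

theorem LinearMap.sum_apply_single_mul {ι R : Type*} [Fintype ι] [DecidableEq ι] [CommSemiring R]
    (f : (ι → R) →ₗ[R] R) (x : ι → R) : ∑ i, f (Pi.single i 1) * x i = f x := by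
  conv_rhs => rw [pi_eq_sum_univ' x, map_sum]
  simp only [map_smul, smul_eq_mul, mul_comm]

theorem Complex.exists_int_eq_of_exp_two_pi_I_mul_eq_one {θ : ℝ}
    (h : exp (2 * Real.pi * I * θ) = 1) : ∃ k : ℤ, θ = k := by
  obtain ⟨k, hk⟩ := exp_eq_one_iff.mp h
  refine ⟨k, ?_⟩
  have h2πI : 2 * Real.pi * I ≠ 0 := by simp [Real.pi_ne_zero, I_ne_zero]
  exact_mod_cast mul_left_cancel₀ h2πI (hk.trans (mul_comm _ _))

theorem Complex.sq_norm_ofReal_sqrt {a : ℝ} (ha : 0 ≤ a) : ‖(√a : ℂ)‖ ^ 2 = a := by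
  rw [norm_real, Real.norm_of_nonneg (Real.sqrt_nonneg a), Real.sq_sqrt ha]

theorem delzant_free_point_general
    {𝔡 : Type*} [AddCommGroup 𝔡] [Module ℝ 𝔡]
    {d : ℕ} (X : Fin d → 𝔡)
    (lam : Fin d → ℝ)
    (proj : (Fin d → ℝ) →ₗ[ℝ] 𝔡) (hproj : ∀ j, proj (Pi.single j 1) = X j)
    (Z : Set (Fin d → ℂ))
    (hZ : Z = {z | ∀ Y ∈ LinearMap.ker proj,
      ∑ j, (‖z j‖ ^ 2 + lam j) * Y j = 0})
    (μ : Module.Dual ℝ 𝔡) (hμ : ∀ j, lam j < μ (X j)) :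
    (∃ z ∈ Z, ∀ j, z j ≠ 0) ∧
    (∀ z ∈ Z, (∀ j, z j ≠ 0) → ∀ θ : Fin d → ℝ,
      (∀ j, Complex.exp (2 * Real.pi * Complex.I * (θ j)) * z j = z j) →
      ∀ j, ∃ k : ℤ, θ j = (k : ℝ)) := by
  subst hZ
  have hpos : ∀ j, 0 < μ (X j) - lam j := fun j => sub_pos.mpr (hμ j)
  refine ⟨⟨fun j => (√(μ (X j) - lam j) : ℂ), fun Y hY => ?_, fun j => ?_⟩, ?_⟩
  · have hmoment : ∀ j, ‖(√(μ (X j) - lam j) : ℂ)‖ ^ 2 + lam j = (μ ∘ₗ proj) (Pi.single j 1) :=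
      fun j => by rw [sq_norm_ofReal_sqrt (hpos j).le, LinearMap.comp_apply, hproj, sub_add_cancel]
    simp only [hmoment]
    rw [LinearMap.sum_apply_single_mul, LinearMap.comp_apply, LinearMap.mem_ker.mp hY, map_zero]
  · exact ofReal_ne_zero.mpr (Real.sqrt_ne_zero'.mpr (hpos j))
  · intro z _ hz θ hθ j
    exact exists_int_eq_of_exp_two_pi_I_mul_eq_one
      (mul_eq_right₀ (hz j) |>.mp (hθ j))

/-- If the polyhedral set `Δ = {μ ∈ 𝔡* : ⟨μ, X_j⟩ ≥ λ_j}` has an interior point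
(some `μ` with `⟨μ, X_j⟩ > λ_j` for all `j`), then the zero level set `Z` of the
moment map of `N = ker (Tᵈ → D)` contains points with all coordinates nonzero, and
at any such point the stabilizer of the standard coordinatewise-rotation action of
`Tᵈ = ℝᵈ/ℤᵈ` on `ℂᵈ` is trivial: `θ • z = z` forces every `θ_j` to be an integer. -/
theorem delzant_free_point
    {𝔡 : Type*} [AddCommGroup 𝔡] [Module ℝ 𝔡] [FiniteDimensional ℝ 𝔡]
    {d : ℕ} (X : Fin d → 𝔡) (hspan : Submodule.span ℝ (Set.range X) = ⊤)
    (lam : Fin d → ℝ)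
    (proj : (Fin d → ℝ) →ₗ[ℝ] 𝔡) (hproj : ∀ j, proj (Pi.single j 1) = X j)
    (Z : Set (Fin d → ℂ))
    (hZ : Z = {z | ∀ Y ∈ LinearMap.ker proj,
      ∑ j, (‖z j‖ ^ 2 + lam j) * Y j = 0})
    (μ : Module.Dual ℝ 𝔡) (hμ : ∀ j, lam j < μ (X j)) :
    (∃ z ∈ Z, ∀ j, z j ≠ 0) ∧
    (∀ z ∈ Z, (∀ j, z j ≠ 0) → ∀ θ : Fin d → ℝ,
      (∀ j, Complex.exp (2 * Real.pi * Complex.I * (θ j)) * z j = z j) →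
      ∀ j, ∃ k : ℤ, θ j = (k : ℝ)) :=
  delzant_free_point_general X lam proj hproj Z hZ μ hμ
end
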